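/- arXiv:1102.4073 — 2 statements merged into one kernel-verified Lean document; each statement's English description precedes it below -/
import Mathlib

section
/- (Key concavity estimate) Let α ∈ (0,1) and φ(x) = C_1 |x|^α on R^d with C_1 > 0. There exist η_1, η_2 ∈ (0,1/2) depending only on α such that for every a ∈ R^d \ {0} and every z in the cone C = {z : |z| < η_1|a|, |z·a| ≥ (1-η_2)|a||z|}, one has φ(a + 2z) + φ(a - 2z) - 2φ(a) ≤ -2^{α-3} C_1 α(1-α) |a|^{α-2} |z|^2. -/
open MeasureTheory Real Filter
open scoped RealInnerProductSpace ENNReal NNReal Topology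

noncomputable section

abbrev Ed (d : ℕ) := EuclideanSpace ℝ (Fin d)

/-!
Write `‖a ± 2z‖² = m ± 4⟪z, a⟫` with `m = ‖a‖² + 4‖z‖²` and `f(s) = s^(α/2)`. The left-hand side
is then `f(m + δ) + f(m - δ) - 2 f(m)` with `δ = 4|⟪z, a⟫|`, plus `2 (f(m) - f(‖a‖²))`. By
concavity the second term is at most `4α ‖a‖^(α-2) ‖z‖²`. Since `f''` is negative and increasing,
the second difference is at most `f''(m + δ) δ²`, and on the cone `δ ≈ 4‖a‖‖z‖` and
`m + δ ≈ ‖a‖²`, so it is about `-4α(2-α) ‖a‖^(α-2) ‖z‖²`: this wins once `η₁, η₂` are small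
compared with `1 - α`.
-/

lemma rpow_le_rpow_add_tangent {p x y : ℝ} (hp0 : 0 ≤ p) (hp1 : p ≤ 1) (hx : 0 < x)
    (hy : 0 ≤ y) : y ^ p ≤ x ^ p + p * x ^ (p - 1) * (y - x) := by
  have h := rpow_one_add_le_one_add_mul_self (s := y / x - 1)
    (by linarith [div_nonneg hy hx.le]) hp0 hp1
  rw [add_sub_cancel, div_rpow hy hx.le, div_le_iff₀ (rpow_pos_of_pos hx p)] at h
  calc y ^ p ≤ (1 + p * (y / x - 1)) * x ^ p := h
    _ = x ^ p + p * x ^ (p - 1) * (y - x) := by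
      rw [rpow_sub_one hx.ne']; field_simp

lemma one_add_mul_self_le_rpow_one_add_of_nonpos {s p : ℝ} (hs : -1 < s) (hp0 : -1 ≤ p)
    (hp1 : p ≤ 0) : 1 + p * s ≤ (1 + s) ^ p := by
  have hpos : 0 < (1 + s) ^ p := rpow_pos_of_pos (by linarith) p
  have h := rpow_one_add_le_one_add_mul_self hs.le (neg_nonneg.2 hp1) (neg_le.1 hp0)
  rw [rpow_neg (by linarith)] at h
  have h1 : 0 < 1 + -p * s := (inv_pos.2 hpos).trans_le h
  rw [inv_le_comm₀ hpos h1] at h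
  refine le_trans ?_ h
  rw [← one_div, le_div_iff₀ h1]
  nlinarith [sq_nonneg (p * s)]

lemma rpow_add_tangent_le_rpow {p x y : ℝ} (hp0 : -1 ≤ p) (hp1 : p ≤ 0) (hx : 0 < x)
    (hy : 0 < y) : x ^ p + p * x ^ (p - 1) * (y - x) ≤ y ^ p := by
  have h := one_add_mul_self_le_rpow_one_add_of_nonpos (s := y / x - 1)
    (by linarith [div_pos hy hx]) hp0 hp1
  rw [add_sub_cancel, div_rpow hy.le hx.le, le_div_iff₀ (rpow_pos_of_pos hx p)] at h
  calc x ^ p + p * x ^ (p - 1) * (y - x) = (1 + p * (y / x - 1)) * x ^ p := by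
        rw [rpow_sub_one hx.ne']; field_simp
    _ ≤ y ^ p := h

lemma rpow_add_add_rpow_sub_le {β m δ : ℝ} (hβ0 : 0 ≤ β) (hβ1 : β ≤ 1) (hδ : 0 ≤ δ)
    (hδm : δ < m) :
    (m + δ) ^ β + (m - δ) ^ β ≤ 2 * m ^ β + β * (β - 1) * (m + δ) ^ (β - 2) * δ ^ 2 := by
  set c := β * (β - 1) * (m + δ) ^ (β - 2)
  set G : ℝ → ℝ := fun t ↦ (m + t) ^ β + (m - t) ^ β - c * t ^ 2
  have hG : ∀ t ∈ Set.Icc 0 δ,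
      HasDerivAt G (β * (m + t) ^ (β - 1) - β * (m - t) ^ (β - 1) - c * (2 * t)) t := by
    intro t ⟨ht0, htδ⟩
    have hplus : HasDerivAt (fun t ↦ (m + t) ^ β) (β * (m + t) ^ (β - 1)) t := by
      simpa using ((hasDerivAt_id t).const_add m).rpow_const (p := β)
        (Or.inl (by simp; linarith))
    have hminus : HasDerivAt (fun t ↦ (m - t) ^ β) (-(β * (m - t) ^ (β - 1))) t := by
      simpa using ((hasDerivAt_id t).const_sub m).rpow_const (p := β)
        (Or.inl (by simp; linarith))
    have hsq : HasDerivAt (fun t ↦ c * t ^ 2) (c * (2 * t)) t := by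
      simpa using (hasDerivAt_pow 2 t).const_mul c
    exact ((hplus.add hminus).sub hsq).congr_deriv (by ring)
  -- `G' ≤ 0`: the derivative `β x^(β-1)` is convex and `β (β-1) x^(β-2)` increases
  have hG' : ∀ t ∈ Set.Ioo 0 δ,
      β * (m + t) ^ (β - 1) - β * (m - t) ^ (β - 1) - c * (2 * t) ≤ 0 := by
    intro t ⟨ht0, htδ⟩
    have htangent := rpow_add_tangent_le_rpow (p := β - 1) (by linarith) (by linarith)
      (x := m + t) (y := m - t) (by linarith) (by linarith)
    rw [show β - 1 - 1 = β - 2 by ring] at htangent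
    have hmono : (m + δ) ^ (β - 2) ≤ (m + t) ^ (β - 2) :=
      rpow_le_rpow_of_nonpos (by linarith) (by linarith) (by linarith)
    have hcoef : β * (β - 1) * (2 * t) ≤ 0 :=
      mul_nonpos_of_nonpos_of_nonneg (mul_nonpos_of_nonneg_of_nonpos hβ0 (by linarith))
        (by linarith)
    linear_combination mul_le_mul_of_nonneg_left htangent hβ0 +
      mul_le_mul_of_nonpos_left hmono hcoef
  have hanti : AntitoneOn G (Set.Icc 0 δ) := by
    refine antitoneOn_of_hasDerivWithinAt_nonpos (convex_Icc 0 δ)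
      (f' := fun t ↦ β * (m + t) ^ (β - 1) - β * (m - t) ^ (β - 1) - c * (2 * t))
      (fun t ht ↦ (hG t ht).continuousAt.continuousWithinAt) (fun t ht ↦ ?_) (fun t ht ↦ ?_)
    · rw [interior_Icc] at ht
      exact (hG t (Set.Ioo_subset_Icc_self ht)).hasDerivWithinAt
    · rw [interior_Icc] at ht
      exact hG' t ht
  have := hanti ⟨le_rfl, hδ⟩ ⟨hδ, le_rfl⟩ hδ
  simp only [G, add_zero, sub_zero, zero_pow two_ne_zero, mul_zero] at this
  linarith

-- `4α` comes from moving `‖a‖²` to `‖a‖² + 4‖z‖²`, the negative term from the second difference.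
def concavityCoeff (α η₁ η₂ : ℝ) : ℝ :=
  α * (4 - 4 * (2 - α) * (1 - η₂) ^ 2 / (1 + 2 * η₁) ^ 4)

lemma sq_rpow_div_two {x : ℝ} (hx : 0 ≤ x) (p : ℝ) : (x ^ 2) ^ (p / 2) = x ^ p := by
  rw [rpow_div_two_eq_sqrt p (sq_nonneg x), sqrt_sq hx]

lemma rpow_add_add_rpow_sub_le_concavityCoeff {α η₁ η₂ A r δ : ℝ} (hα0 : 0 ≤ α) (hα2 : α ≤ 2)
    (hη₁ : η₁ < 1 / 2) (hη₂ : η₂ ≤ 1) (hA : 0 < A) (hr : 0 ≤ r) (hrA : r ≤ η₁ * A)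
    (hδl : 4 * (1 - η₂) * A * r ≤ δ) (hδu : δ ≤ 4 * A * r) :
    (A ^ 2 + 4 * r ^ 2 + δ) ^ (α / 2) + (A ^ 2 + 4 * r ^ 2 - δ) ^ (α / 2) - 2 * A ^ α ≤
      concavityCoeff α η₁ η₂ * A ^ (α - 2) * r ^ 2 := by
  set m := A ^ 2 + 4 * r ^ 2
  have hδ : 0 ≤ 4 * (1 - η₂) * A * r := by have := mul_nonneg hA.le hr; nlinarith
  have hη₁0 : 0 ≤ η₁ := by nlinarith
  have h2r : 2 * r < A := by nlinarith
  have hδm : δ < m := by nlinarith [mul_pos (sub_pos.2 h2r) (sub_pos.2 h2r)]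
  have hM : 0 < m + δ := by nlinarith
  have hAm : A ^ 2 ≤ m + δ := by linarith [sq_nonneg r]
  have hmA : m + δ ≤ ((1 + 2 * η₁) * A) ^ 2 := by nlinarith
  have htangent := rpow_le_rpow_add_tangent (p := α / 2) (by linarith) (by linarith)
    (pow_pos hA 2) (by positivity : 0 ≤ m)
  have hsecond := rpow_add_add_rpow_sub_le (β := α / 2) (by linarith) (by linarith)
    (hδ.trans hδl) hδm
  rw [rpow_sub_one (by positivity), sq_rpow_div_two hA.le] at htangent
  rw [rpow_sub (by linarith), rpow_two] at hsecond
  -- the factor in front of `δ ^ 2` in `hsecond` is negative, so we bound the rest from below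
  have hlower : A ^ α * (4 * (1 - η₂) * A * r) ^ 2 / (((1 + 2 * η₁) * A) ^ 2) ^ 2 ≤
      (m + δ) ^ (α / 2) * δ ^ 2 / (m + δ) ^ 2 := by
    rw [← sq_rpow_div_two hA.le α]
    gcongr
  have hcoef : α / 2 * (α / 2 - 1) ≤ 0 :=
    mul_nonpos_of_nonneg_of_nonpos (by linarith) (by linarith)
  calc _ ≤ 2 * (A ^ α + α / 2 * (A ^ α / A ^ 2) * (m - A ^ 2)) +
        α / 2 * (α / 2 - 1) * (A ^ α * (4 * (1 - η₂) * A * r) ^ 2 / (((1 + 2 * η₁) * A) ^ 2) ^ 2)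
          - 2 * A ^ α := by
            linear_combination hsecond + 2 * htangent + mul_le_mul_of_nonpos_left hlower hcoef
    _ = concavityCoeff α η₁ η₂ * A ^ (α - 2) * r ^ 2 := by
      rw [concavityCoeff, rpow_sub hA, rpow_two]
      field_simp
      ring

lemma norm_add_two_smul_rpow_add_norm_sub_two_smul_rpow_le {E : Type*}
    [NormedAddCommGroup E] [InnerProductSpace ℝ E] {α η₁ η₂ : ℝ} (hα0 : 0 ≤ α) (hα2 : α ≤ 2)
    (hη₁ : η₁ < 1 / 2) (hη₂ : η₂ ≤ 1) {a z : E} (ha : a ≠ 0) (hz : ‖z‖ ≤ η₁ * ‖a‖)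
    (hcone : (1 - η₂) * ‖a‖ * ‖z‖ ≤ |⟪z, a⟫|) :
    ‖a + (2 : ℝ) • z‖ ^ α + ‖a - (2 : ℝ) • z‖ ^ α - 2 * ‖a‖ ^ α ≤
      concavityCoeff α η₁ η₂ * ‖a‖ ^ (α - 2) * ‖z‖ ^ 2 := by
  have hplus : ‖a + (2 : ℝ) • z‖ ^ 2 = ‖a‖ ^ 2 + 4 * ‖z‖ ^ 2 + 4 * ⟪z, a⟫ := by
    rw [norm_add_sq_real, inner_smul_right, norm_smul, real_inner_comm]; norm_num; ring
  have hminus : ‖a - (2 : ℝ) • z‖ ^ 2 = ‖a‖ ^ 2 + 4 * ‖z‖ ^ 2 - 4 * ⟪z, a⟫ := by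
    rw [norm_sub_sq_real, inner_smul_right, norm_smul, real_inner_comm]; norm_num; ring
  have hsum : ‖a + (2 : ℝ) • z‖ ^ α + ‖a - (2 : ℝ) • z‖ ^ α =
      (‖a‖ ^ 2 + 4 * ‖z‖ ^ 2 + 4 * |⟪z, a⟫|) ^ (α / 2) +
        (‖a‖ ^ 2 + 4 * ‖z‖ ^ 2 - 4 * |⟪z, a⟫|) ^ (α / 2) := by
    rw [← sq_rpow_div_two (norm_nonneg _), ← sq_rpow_div_two (norm_nonneg (a - _)), hplus,
      hminus]
    rcases abs_choice ⟪z, a⟫ with h | h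
    · rw [h]
    · rw [h, add_comm, mul_neg, sub_neg_eq_add, ← sub_eq_add_neg]
  rw [hsum]
  exact rpow_add_add_rpow_sub_le_concavityCoeff hα0 hα2 hη₁ hη₂ (norm_pos_iff.2 ha)
    (norm_nonneg z) hz (by linarith) (by linarith [abs_real_inner_le_norm z a])

lemma concavityCoeff_le {α : ℝ} (hα0 : 0 < α) (hα1 : α < 1) :
    concavityCoeff α ((1 - α) / 32) ((1 - α) / 32) ≤ -(2 ^ (α - 3) * α * (1 - α)) := by
  have hpow : (2 : ℝ) ^ (α - 3) ≤ 2 ^ (-2 : ℝ) :=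
    rpow_le_rpow_of_exponent_le one_le_two (by linarith)
  rw [rpow_neg zero_le_two, rpow_two] at hpow
  have hbracket : 4 - 4 * (2 - α) * (1 - (1 - α) / 32) ^ 2 / (1 + 2 * ((1 - α) / 32)) ^ 4 ≤
      -((1 - α) / 4) := by
    rw [sub_le_comm, le_div_iff₀ (by positivity)]
    -- with `t = 1 - α` this is `(1 + t/16)^5 ≤ (1 + t)(1 - t/32)^2` for `0 < t < 1`
    nlinarith [pow_pos (sub_pos.2 hα1) 2, pow_pos (sub_pos.2 hα1) 3, pow_pos (sub_pos.2 hα1) 4,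
      mul_pos hα0 (sub_pos.2 hα1)]
  rw [concavityCoeff]
  nlinarith [mul_le_mul_of_nonneg_left hbracket hα0.le, mul_pos hα0 (sub_pos.2 hα1)]

theorem stmt8_general (d : ℕ) (α : ℝ) (hα0 : 0 < α) (hα1 : α < 1) :
    ∃ η₁ η₂ : ℝ, η₁ ∈ Set.Ioo (0 : ℝ) (1 / 2) ∧ η₂ ∈ Set.Ioo (0 : ℝ) (1 / 2) ∧
      ∀ C₁ : ℝ, 0 < C₁ → ∀ a z : Ed d, a ≠ 0 →
        ‖z‖ < η₁ * ‖a‖ → (1 - η₂) * ‖a‖ * ‖z‖ ≤ |⟪z, a⟫| →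
        C₁ * ‖a + (2 : ℝ) • z‖ ^ α + C₁ * ‖a - (2 : ℝ) • z‖ ^ α - 2 * (C₁ * ‖a‖ ^ α) ≤
          -(2 ^ (α - 3) * C₁ * α * (1 - α) * ‖a‖ ^ (α - 2) * ‖z‖ ^ 2) := by
  have hη : (1 - α) / 32 ∈ Set.Ioo (0 : ℝ) (1 / 2) := ⟨by linarith, by linarith⟩
  refine ⟨(1 - α) / 32, (1 - α) / 32, hη, hη, fun C₁ hC₁ a z ha hz hcone ↦ ?_⟩
  have hmain := norm_add_two_smul_rpow_add_norm_sub_two_smul_rpow_le hα0.le (by linarith)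
    hη.2 (by linarith) ha hz.le hcone
  calc C₁ * ‖a + (2 : ℝ) • z‖ ^ α + C₁ * ‖a - (2 : ℝ) • z‖ ^ α - 2 * (C₁ * ‖a‖ ^ α)
      = C₁ * (‖a + (2 : ℝ) • z‖ ^ α + ‖a - (2 : ℝ) • z‖ ^ α - 2 * ‖a‖ ^ α) := by ring
    _ ≤ C₁ * (concavityCoeff α ((1 - α) / 32) ((1 - α) / 32) * ‖a‖ ^ (α - 2) * ‖z‖ ^ 2) := by
      gcongr
    _ ≤ C₁ * (-(2 ^ (α - 3) * α * (1 - α)) * ‖a‖ ^ (α - 2) * ‖z‖ ^ 2) := by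
      gcongr
      exact concavityCoeff_le hα0 hα1
    _ = -(2 ^ (α - 3) * C₁ * α * (1 - α) * ‖a‖ ^ (α - 2) * ‖z‖ ^ 2) := by ring

/-- Key concavity estimate: for `φ(x) = C₁|x|^α`, `α ∈ (0,1)`, there exist
`η₁, η₂ ∈ (0,1/2)` depending only on `α` such that for `a ≠ 0` and `z` in the cone
`{z : |z| < η₁|a|, |z·a| ≥ (1-η₂)|a||z|}`,
`φ(a+2z) + φ(a-2z) - 2φ(a) ≤ -2^{α-3} C₁ α(1-α)|a|^{α-2}|z|²`. -/
theorem stmt8 (d : ℕ) (hd : 1 ≤ d) (α : ℝ) (hα0 : 0 < α) (hα1 : α < 1) :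
    ∃ η₁ η₂ : ℝ, η₁ ∈ Set.Ioo (0 : ℝ) (1 / 2) ∧ η₂ ∈ Set.Ioo (0 : ℝ) (1 / 2) ∧
      ∀ C₁ : ℝ, 0 < C₁ → ∀ a z : Ed d, a ≠ 0 →
        ‖z‖ < η₁ * ‖a‖ → (1 - η₂) * ‖a‖ * ‖z‖ ≤ |⟪z, a⟫| →
        C₁ * ‖a + (2 : ℝ) • z‖ ^ α + C₁ * ‖a - (2 : ℝ) • z‖ ^ α - 2 * (C₁ * ‖a‖ ^ α) ≤
          -(2 ^ (α - 3) * C₁ * α * (1 - α) * ‖a‖ ^ (α - 2) * ‖z‖ ^ 2) :=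
  stmt8_general d α hα0 hα1
end
end

section
/- Let σ ∈ (0,1), 1 < p < ∞, and η ∈ C_0^∞(B_2) with η ≡ 1 on B_1. Let K be a nonnegative kernel with K(y) ≤ Λ(2-σ)|y|^{-d-σ} and L the associated non-local operator Lu(x) = ∫ (u(x+y) - u(x)) K(y) dy. Then for all u ∈ L_p(R^d, ω dx) with ω(x) = 1/(1+|x|^{d+σ}), the commutator satisfies ‖L(ηu) - η(Lu)‖_{L_p(R^d)} ≤ N(d,Λ,σ,p,η) ‖u‖_{L_p(R^d, ω)}. -/
open MeasureTheory Real Filter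
open scoped ENNReal NNReal Topology

open Metric

noncomputable section

/-- The non-local operator for `σ ∈ (0,1)`: `Lu(x) = ∫ (u(x+y) - u(x)) K(y) dy`. -/
def Lop0 {d : ℕ} (K u : Ed d → ℝ) (x : Ed d) : ℝ :=
  ∫ y, (u (x + y) - u x) * K y

/-- The weight `ω(x) = 1/(1+|x|^{d+σ})`. -/
def wt (d : ℕ) (σ : ℝ) (x : Ed d) : ℝ := (1 + ‖x‖ ^ ((d : ℝ) + σ))⁻¹

lemma aux_ball_int (d : ℕ) {a : ℝ} (ha : 0 < a) (had : a < d) :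
    ∫⁻ x in Metric.ball (0 : Ed d) 1, ENNReal.ofReal (‖x‖ ^ (-a)) < ∞ := by
  set μ := volume.restrict (Metric.ball (0 : Ed d) 1) with hμ
  have hmeas : AEMeasurable (fun x : Ed d => ‖x‖ ^ (-a)) μ :=
    (measurable_norm.pow_const _).aemeasurable
  have hnn : 0 ≤ᵐ[μ] fun x : Ed d => ‖x‖ ^ (-a) :=
    ae_of_all _ fun x => rpow_nonneg (norm_nonneg x) _
  rw [show ∫⁻ x in Metric.ball (0 : Ed d) 1, ENNReal.ofReal (‖x‖ ^ (-a))
      = ∫⁻ x, ENNReal.ofReal (‖x‖ ^ (-a)) ∂μ from rfl,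
    lintegral_eq_lintegral_meas_le μ hnn hmeas]
  set B := volume (Metric.ball (0 : Ed d) 1) with hB
  have hBfin : B < ∞ := measure_ball_lt_top
  have key : ∀ t : ℝ, 0 < t →
      μ {x : Ed d | t ≤ ‖x‖ ^ (-a)} ≤ volume (Metric.closedBall (0 : Ed d) (t ^ (-a⁻¹))) := by
    intro t ht
    refine le_trans (Measure.restrict_le_self _) (measure_mono ?_)
    intro x hx
    simp only [Set.mem_setOf_eq] at hx
    have hx0 : x ≠ 0 := by
      rintro rfl
      rw [norm_zero, Real.zero_rpow (neg_ne_zero.2 ha.ne')] at hx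
      linarith
    have hxn : 0 < ‖x‖ := norm_pos_iff.2 hx0
    have h1 : t ^ a⁻¹ ≤ (‖x‖ ^ (-a)) ^ a⁻¹ :=
      Real.rpow_le_rpow ht.le hx (by positivity)
    have h2 : (‖x‖ ^ (-a)) ^ a⁻¹ = ‖x‖⁻¹ := by
      rw [← Real.rpow_mul (norm_nonneg x), neg_mul, mul_inv_cancel₀ ha.ne',
        Real.rpow_neg_one]
    rw [h2] at h1
    have ht' : 0 < t ^ a⁻¹ := Real.rpow_pos_of_pos ht _
    have h3 : ‖x‖ ≤ (t ^ a⁻¹)⁻¹ := (le_inv_comm₀ ht' hxn).1 h1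
    rw [mem_closedBall_zero_iff, Real.rpow_neg ht.le]
    exact h3
  have keyB : ∀ t : ℝ, μ {x : Ed d | t ≤ ‖x‖ ^ (-a)} ≤ B := by
    intro t
    calc μ {x : Ed d | t ≤ ‖x‖ ^ (-a)} ≤ μ Set.univ := measure_mono (Set.subset_univ _)
      _ = B := by rw [hμ, Measure.restrict_apply_univ]
  calc ∫⁻ t in Set.Ioi (0:ℝ), μ {x : Ed d | t ≤ ‖x‖ ^ (-a)}
      ≤ ∫⁻ t in Set.Ioc (0:ℝ) 1 ∪ Set.Ioi 1, μ {x : Ed d | t ≤ ‖x‖ ^ (-a)} :=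
        lintegral_mono_set Set.Ioi_subset_Ioc_union_Ioi
    _ ≤ (∫⁻ t in Set.Ioc (0:ℝ) 1, μ {x : Ed d | t ≤ ‖x‖ ^ (-a)})
        + ∫⁻ t in Set.Ioi (1:ℝ), μ {x : Ed d | t ≤ ‖x‖ ^ (-a)} := lintegral_union_le _ _ _
    _ < ∞ := by
        refine ENNReal.add_lt_top.2 ⟨?_, ?_⟩
        · calc (∫⁻ t in Set.Ioc (0:ℝ) 1, μ {x : Ed d | t ≤ ‖x‖ ^ (-a)})
              ≤ ∫⁻ _ in Set.Ioc (0:ℝ) 1, B := setLIntegral_mono' measurableSet_Ioc fun t _ => keyB t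
            _ = B * volume (Set.Ioc (0:ℝ) 1) := by rw [setLIntegral_const]
            _ < ∞ := by
                refine ENNReal.mul_lt_top hBfin ?_
                simp [Real.volume_Ioc]
        · have hb : ∀ t ∈ Set.Ioi (1:ℝ), μ {x : Ed d | t ≤ ‖x‖ ^ (-a)}
              ≤ ENNReal.ofReal (t ^ (-(a⁻¹ * d))) * B := by
            intro t ht
            have ht0 : (0:ℝ) < t := lt_trans one_pos ht
            refine (key t ht0).trans ?_
            rw [Measure.addHaar_closedBall _ _ (by positivity : (0:ℝ) ≤ t ^ (-a⁻¹))]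
            refine le_of_eq ?_
            congr 1
            rw [← Real.rpow_natCast (t ^ (-a⁻¹)) _, ← Real.rpow_mul ht0.le, neg_mul]
            congr 2
            · simp [finrank_euclideanSpace]
          calc (∫⁻ t in Set.Ioi (1:ℝ), μ {x : Ed d | t ≤ ‖x‖ ^ (-a)})
              ≤ ∫⁻ t in Set.Ioi (1:ℝ), ENNReal.ofReal (t ^ (-(a⁻¹ * d))) * B :=
                setLIntegral_mono' measurableSet_Ioi hb
            _ = (∫⁻ t in Set.Ioi (1:ℝ), ENNReal.ofReal (t ^ (-(a⁻¹ * d)))) * B :=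
                lintegral_mul_const' _ _ hBfin.ne
            _ < ∞ := by
                refine ENNReal.mul_lt_top ?_ hBfin
                refine IntegrableOn.setLIntegral_lt_top ?_
                refine integrableOn_Ioi_rpow_of_lt ?_ one_pos
                have h1d : 1 < a⁻¹ * d := by
                  rw [← div_eq_inv_mul]
                  exact (one_lt_div ha).2 had
                linarith

lemma aux_compl_int (d : ℕ) {b : ℝ} (hb : (d:ℝ) < b) :
    ∫⁻ x in (Metric.ball (0 : Ed d) 1)ᶜ, ENNReal.ofReal (‖x‖ ^ (-b)) < ∞ := by
  have hb0 : 0 < b := lt_of_le_of_lt (Nat.cast_nonneg d) hb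
  have hpt : ∀ x : Ed d, x ∈ (Metric.ball (0 : Ed d) 1)ᶜ →
      ENNReal.ofReal (‖x‖ ^ (-b)) ≤ ENNReal.ofReal ((2:ℝ) ^ b * (1 + ‖x‖) ^ (-b)) := by
    intro x hx
    have hx1 : (1:ℝ) ≤ ‖x‖ := by
      simp only [Set.mem_compl_iff, mem_ball, dist_zero_right, not_lt] at hx
      exact hx
    have hx0 : (0:ℝ) < ‖x‖ := lt_of_lt_of_le one_pos hx1
    refine ENNReal.ofReal_le_ofReal ?_
    have h1 : (1 + ‖x‖) ^ b ≤ (2 * ‖x‖) ^ b :=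
      Real.rpow_le_rpow (by positivity) (by linarith) hb0.le
    rw [Real.mul_rpow (by norm_num) hx0.le] at h1
    rw [Real.rpow_neg (norm_nonneg x), Real.rpow_neg (by positivity)]
    have h2 : (1 + ‖x‖) ^ b / 2 ^ b ≤ ‖x‖ ^ b := by
      rw [div_le_iff₀ (by positivity : (0:ℝ) < 2 ^ b)]
      linarith [h1]
    calc (‖x‖ ^ b)⁻¹ ≤ ((1 + ‖x‖) ^ b / 2 ^ b)⁻¹ := by
          apply inv_anti₀
          · positivity
          · exact h2
      _ = 2 ^ b * ((1 + ‖x‖) ^ b)⁻¹ := by field_simp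
  calc ∫⁻ x in (Metric.ball (0 : Ed d) 1)ᶜ, ENNReal.ofReal (‖x‖ ^ (-b))
      ≤ ∫⁻ x in (Metric.ball (0 : Ed d) 1)ᶜ, ENNReal.ofReal ((2:ℝ) ^ b * (1 + ‖x‖) ^ (-b)) :=
        setLIntegral_mono' measurableSet_ball.compl hpt
    _ ≤ ∫⁻ x : Ed d, ENNReal.ofReal ((2:ℝ) ^ b * (1 + ‖x‖) ^ (-b)) :=
        setLIntegral_le_lintegral _ _
    _ = ∫⁻ x : Ed d, ENNReal.ofReal ((2:ℝ) ^ b) * ENNReal.ofReal ((1 + ‖x‖) ^ (-b)) := by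
        congr 1; funext x
        rw [ENNReal.ofReal_mul (by positivity)]
    _ = ENNReal.ofReal ((2:ℝ) ^ b) * ∫⁻ x : Ed d, ENNReal.ofReal ((1 + ‖x‖) ^ (-b)) :=
        lintegral_const_mul' _ _ ENNReal.ofReal_ne_top
    _ < ∞ := by
        refine ENNReal.mul_lt_top ENNReal.ofReal_lt_top ?_
        refine finite_integral_one_add_norm ?_
        rwa [finrank_euclideanSpace, Fintype.card_fin]

lemma far_real_ineq (d : ℕ) {σ : ℝ} (hσ0 : 0 < σ) (z : Ed d) :
    (max 1 (‖z‖ - 2)) ^ (-((d:ℝ) + σ)) ≤ 4 ^ ((d:ℝ) + σ) * 2 * wt d σ z := by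
  set e : ℝ := (d:ℝ) + σ with he
  have he0 : 0 < e := by positivity
  set s := ‖z‖ with hs
  have hs0 : 0 ≤ s := norm_nonneg z
  have hm : (1 + s) / 4 ≤ max 1 (s - 2) := by
    rcases le_or_gt s 3 with h | h
    · calc (1 + s) / 4 ≤ 1 := by linarith
        _ ≤ max 1 (s - 2) := le_max_left _ _
    · calc (1 + s) / 4 ≤ s - 2 := by linarith
        _ ≤ max 1 (s - 2) := le_max_right _ _
  have h1 : (max 1 (s - 2)) ^ (-e) ≤ ((1 + s) / 4) ^ (-e) :=
    Real.rpow_le_rpow_of_nonpos (by positivity) hm (by linarith)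
  have h2 : ((1 + s) / 4) ^ (-e) = 4 ^ e * (1 + s) ^ (-e) := by
    rw [Real.div_rpow (by linarith) (by norm_num), Real.rpow_neg (by linarith),
      Real.rpow_neg (by norm_num : (0:ℝ) ≤ 4), div_eq_mul_inv, inv_inv]
    ring
  have h3 : (1 + s) ^ (-e) ≤ 2 * wt d σ z := by
    have hse : s ^ e ≤ (1 + s) ^ e := Real.rpow_le_rpow hs0 (by linarith) he0.le
    have h1e : (1:ℝ) ≤ (1 + s) ^ e := Real.one_le_rpow (by linarith) he0.le
    have hpos : (0:ℝ) < 1 + s ^ e := by positivity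
    have hpos2 : (0:ℝ) < (1 + s) ^ e := by positivity
    have key : 1 + s ^ e ≤ 2 * (1 + s) ^ e := by linarith
    rw [Real.rpow_neg (by linarith), wt]
    calc ((1 + s) ^ e)⁻¹ ≤ 2 / (1 + s ^ e) := by
          rw [inv_eq_one_div, div_le_div_iff₀ hpos2 hpos]
          nlinarith
      _ = 2 * (1 + s ^ e)⁻¹ := by rw [div_eq_mul_inv]
  calc (max 1 (s - 2)) ^ (-e) ≤ ((1 + s) / 4) ^ (-e) := h1
    _ = 4 ^ e * (1 + s) ^ (-e) := h2
    _ ≤ 4 ^ e * (2 * wt d σ z) := by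
        refine mul_le_mul_of_nonneg_left h3 (by positivity)
    _ = 4 ^ e * 2 * wt d σ z := by ring


lemma kernel_bound_z (d : ℕ) (hd : 1 ≤ d) {σ Λ : ℝ} (hσ0 : 0 < σ) (hσ1 : σ < 1) (hΛ : 0 < Λ)
    (η : Ed d → ℝ) {L M₀ : ℝ} (hL0 : 0 ≤ L) (hM0 : 0 ≤ M₀)
    (hL : ∀ x y : Ed d, |η x - η y| ≤ L * ‖x - y‖) (hM : ∀ x, |η x| ≤ M₀) :
    ∃ A : ℝ≥0∞, A ≠ ∞ ∧ ∀ K : Ed d → ℝ,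
      (∀ y : Ed d, y ≠ 0 → 0 ≤ K y ∧ K y ≤ Λ * (2 - σ) * ‖y‖ ^ (-((d : ℝ) + σ))) →
      ∀ x : Ed d, (∫⁻ z, ENNReal.ofReal |η z - η x| * ENNReal.ofReal (K (z - x))) ≤ A := by
  have hρ : (0:ℝ) < Λ * (2 - σ) := by nlinarith
  set I1 := ∫⁻ w in Metric.ball (0 : Ed d) 1, ENNReal.ofReal (‖w‖ ^ (-((d:ℝ) + σ - 1))) with hI1
  set I2 := ∫⁻ w in (Metric.ball (0 : Ed d) 1)ᶜ, ENNReal.ofReal (‖w‖ ^ (-((d:ℝ) + σ))) with hI2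
  have hI1fin : I1 < ∞ := by
    refine aux_ball_int d ?_ ?_
    · have : (1:ℝ) ≤ d := by exact_mod_cast hd
      linarith
    · linarith
  have hI2fin : I2 < ∞ := aux_compl_int d (by linarith)
  refine ⟨ENNReal.ofReal (L * (Λ * (2 - σ))) * I1 + ENNReal.ofReal (2 * M₀ * (Λ * (2 - σ))) * I2,
    by finiteness, ?_⟩
  intro K hKb x
  -- substitute z = x + w
  have hsub : (∫⁻ z, ENNReal.ofReal |η z - η x| * ENNReal.ofReal (K (z - x)))
      = ∫⁻ w, ENNReal.ofReal |η (x + w) - η x| * ENNReal.ofReal (K w) := by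
    rw [← lintegral_add_left_eq_self
      (fun z => ENNReal.ofReal |η z - η x| * ENNReal.ofReal (K (z - x))) x]
    refine lintegral_congr fun w => ?_
    simp [add_sub_cancel_left]
  rw [hsub]
  rw [← lintegral_add_compl
    (fun w => ENNReal.ofReal |η (x + w) - η x| * ENNReal.ofReal (K w))
    (measurableSet_ball (x := (0:Ed d)) (ε := 1))]
  refine add_le_add ?_ ?_
  · -- ball part
    calc ∫⁻ w in Metric.ball (0:Ed d) 1,
          ENNReal.ofReal |η (x + w) - η x| * ENNReal.ofReal (K w)
        ≤ ∫⁻ w in Metric.ball (0:Ed d) 1,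
          ENNReal.ofReal (L * (Λ * (2 - σ))) * ENNReal.ofReal (‖w‖ ^ (-((d:ℝ) + σ - 1))) := by
          refine setLIntegral_mono' measurableSet_ball fun w hw => ?_
          rcases eq_or_ne w 0 with rfl | hw0
          · simp
          · obtain ⟨hK0, hKle⟩ := hKb w hw0
            have hwn : (0:ℝ) < ‖w‖ := norm_pos_iff.2 hw0
            have h1 : |η (x + w) - η x| ≤ L * ‖w‖ := by
              have := hL (x + w) x
              simpa [add_sub_cancel_left] using this
            rw [← ENNReal.ofReal_mul (abs_nonneg _), ← ENNReal.ofReal_mul (by positivity)]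
            refine ENNReal.ofReal_le_ofReal ?_
            calc |η (x + w) - η x| * K w
                ≤ (L * ‖w‖) * (Λ * (2 - σ) * ‖w‖ ^ (-((d:ℝ) + σ))) :=
                  mul_le_mul h1 hKle hK0 (by positivity)
              _ = L * (Λ * (2 - σ)) * (‖w‖ ^ (-((d:ℝ) + σ - 1))) := by
                  rw [show -((d:ℝ) + σ - 1) = 1 + -((d:ℝ) + σ) by ring,
                    Real.rpow_add hwn, Real.rpow_one]
                  ring
      _ = ENNReal.ofReal (L * (Λ * (2 - σ))) * I1 := by
          rw [hI1]; exact lintegral_const_mul' _ _ ENNReal.ofReal_ne_top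
  · -- complement part
    calc ∫⁻ w in (Metric.ball (0:Ed d) 1)ᶜ,
          ENNReal.ofReal |η (x + w) - η x| * ENNReal.ofReal (K w)
        ≤ ∫⁻ w in (Metric.ball (0:Ed d) 1)ᶜ,
          ENNReal.ofReal (2 * M₀ * (Λ * (2 - σ))) * ENNReal.ofReal (‖w‖ ^ (-((d:ℝ) + σ))) := by
          refine setLIntegral_mono' measurableSet_ball.compl fun w hw => ?_
          have hw1 : (1:ℝ) ≤ ‖w‖ := by
            simp only [Set.mem_compl_iff, mem_ball, dist_zero_right, not_lt] at hw
            exact hw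
          have hw0 : w ≠ 0 := by
            intro h; rw [h, norm_zero] at hw1; linarith
          obtain ⟨hK0, hKle⟩ := hKb w hw0
          have h1 : |η (x + w) - η x| ≤ 2 * M₀ := by
            calc |η (x + w) - η x| ≤ |η (x + w)| + |η x| := abs_sub _ _
              _ ≤ 2 * M₀ := by linarith [hM (x + w), hM x]
          rw [← ENNReal.ofReal_mul (abs_nonneg _), ← ENNReal.ofReal_mul (by positivity)]
          refine ENNReal.ofReal_le_ofReal ?_
          calc |η (x + w) - η x| * K w
              ≤ (2 * M₀) * (Λ * (2 - σ) * ‖w‖ ^ (-((d:ℝ) + σ))) :=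
                mul_le_mul h1 hKle hK0 (by positivity)
            _ = 2 * M₀ * (Λ * (2 - σ)) * (‖w‖ ^ (-((d:ℝ) + σ))) := by ring
      _ = ENNReal.ofReal (2 * M₀ * (Λ * (2 - σ))) * I2 := by
          rw [hI2]; exact lintegral_const_mul' _ _ ENNReal.ofReal_ne_top

lemma kernel_bound_x (d : ℕ) (hd : 1 ≤ d) {σ Λ : ℝ} (hσ0 : 0 < σ) (hσ1 : σ < 1) (hΛ : 0 < Λ)
    (η : Ed d → ℝ) (hηc : Continuous η) (hηsupp : tsupport η ⊆ Metric.ball (0 : Ed d) 2)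
    {L M₀ : ℝ} (hL0 : 0 ≤ L) (hM0 : 0 ≤ M₀)
    (hL : ∀ x y : Ed d, |η x - η y| ≤ L * ‖x - y‖) (hM : ∀ x, |η x| ≤ M₀) :
    ∃ C : ℝ≥0∞, C ≠ ∞ ∧ ∀ K : Ed d → ℝ, Measurable K →
      (∀ y : Ed d, y ≠ 0 → 0 ≤ K y ∧ K y ≤ Λ * (2 - σ) * ‖y‖ ^ (-((d : ℝ) + σ))) →
      ∀ z : Ed d, (∫⁻ x, ENNReal.ofReal |η z - η x| * ENNReal.ofReal (K (z - x)))
        ≤ C * ENNReal.ofReal (wt d σ z) := by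
  have hρ : (0:ℝ) < Λ * (2 - σ) := by nlinarith
  have hη0 : ∀ x : Ed d, 2 ≤ ‖x‖ → η x = 0 := by
    intro x hx
    refine image_eq_zero_of_notMem_tsupport fun hmem => ?_
    have := hηsupp hmem
    rw [mem_ball, dist_zero_right] at this
    linarith
  set I1 := ∫⁻ w in Metric.ball (0 : Ed d) 1, ENNReal.ofReal (‖w‖ ^ (-((d:ℝ) + σ - 1))) with hI1
  set I2 := ∫⁻ w in (Metric.ball (0 : Ed d) 1)ᶜ, ENNReal.ofReal (‖w‖ ^ (-((d:ℝ) + σ))) with hI2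
  have hI1fin : I1 < ∞ := by
    refine aux_ball_int d ?_ ?_
    · have : (1:ℝ) ≤ d := by exact_mod_cast hd
      linarith
    · linarith
  have hI2fin : I2 < ∞ := aux_compl_int d (by linarith)
  set c3 : ℝ := (1 + 3 ^ ((d:ℝ) + σ))⁻¹ with hc3
  have hc3pos : 0 < c3 := by positivity
  have hwt3 : ∀ z : Ed d, ‖z‖ < 3 → c3 ≤ wt d σ z := by
    intro z hz
    rw [hc3, wt]
    refine inv_anti₀ (by positivity) ?_
    have : ‖z‖ ^ ((d:ℝ) + σ) ≤ 3 ^ ((d:ℝ) + σ) :=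
      Real.rpow_le_rpow (norm_nonneg z) hz.le (by positivity)
    linarith
  have hwtpos : ∀ z : Ed d, 0 < wt d σ z := fun z => by
    rw [wt]; positivity
  set C1 : ℝ≥0∞ := ENNReal.ofReal (L * (Λ * (2 - σ))) * I1 * (ENNReal.ofReal c3)⁻¹ with hC1
  set C2 : ℝ≥0∞ := ENNReal.ofReal (M₀ * (Λ * (2 - σ))) * I2 * (ENNReal.ofReal c3)⁻¹ with hC2
  set C3 : ℝ≥0∞ := ENNReal.ofReal (M₀ * (Λ * (2 - σ)) * (4 ^ ((d:ℝ) + σ) * 2))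
      * volume (Metric.ball (0 : Ed d) 2) with hC3
  have hc3ne : ENNReal.ofReal c3 ≠ 0 := by
    simp [ENNReal.ofReal_eq_zero, not_le, hc3pos]
  have hC1fin : C1 ≠ ∞ := by
    rw [hC1]
    refine ENNReal.mul_ne_top (ENNReal.mul_ne_top ENNReal.ofReal_ne_top hI1fin.ne) ?_
    simp [hc3ne]
  have hC2fin : C2 ≠ ∞ := by
    rw [hC2]
    refine ENNReal.mul_ne_top (ENNReal.mul_ne_top ENNReal.ofReal_ne_top hI2fin.ne) ?_
    simp [hc3ne]
  have hC3fin : C3 ≠ ∞ :=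
    ENNReal.mul_ne_top ENNReal.ofReal_ne_top measure_ball_lt_top.ne
  -- helper: X ≤ X * c3⁻¹ * wt z when c3 ≤ wt z
  have hhelp : ∀ (X : ℝ≥0∞) (z : Ed d), c3 ≤ wt d σ z →
      X ≤ X * (ENNReal.ofReal c3)⁻¹ * ENNReal.ofReal (wt d σ z) := by
    intro X z hz
    calc X = X * ((ENNReal.ofReal c3)⁻¹ * ENNReal.ofReal c3) := by
          rw [ENNReal.inv_mul_cancel hc3ne ENNReal.ofReal_ne_top, mul_one]
      _ = X * (ENNReal.ofReal c3)⁻¹ * ENNReal.ofReal c3 := by rw [mul_assoc]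
      _ ≤ X * (ENNReal.ofReal c3)⁻¹ * ENNReal.ofReal (wt d σ z) := by
          exact mul_le_mul_right (ENNReal.ofReal_le_ofReal hz) _
  refine ⟨C1 + C2 + C3, by simp [ENNReal.add_ne_top, hC1fin, hC2fin, hC3fin], ?_⟩
  intro K hKm hKb z
  -- substitute x = w + z
  have hsub : (∫⁻ x, ENNReal.ofReal |η z - η x| * ENNReal.ofReal (K (z - x)))
      = ∫⁻ w, ENNReal.ofReal |η z - η (w + z)| * ENNReal.ofReal (K (-w)) := by
    rw [← lintegral_add_right_eq_self
      (fun x => ENNReal.ofReal |η z - η x| * ENNReal.ofReal (K (z - x))) z]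
    refine lintegral_congr fun w => ?_
    have : z - (w + z) = -w := by abel
    rw [this]
  rw [hsub]
  rw [← lintegral_add_compl
    (fun w => ENNReal.ofReal |η z - η (w + z)| * ENNReal.ofReal (K (-w)))
    (measurableSet_ball (x := (0:Ed d)) (ε := 1))]
  have hball : (∫⁻ w in Metric.ball (0:Ed d) 1,
      ENNReal.ofReal |η z - η (w + z)| * ENNReal.ofReal (K (-w)))
      ≤ C1 * ENNReal.ofReal (wt d σ z) := by
    rcases lt_or_ge ‖z‖ 3 with hz3 | hz3
    · calc (∫⁻ w in Metric.ball (0:Ed d) 1,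
            ENNReal.ofReal |η z - η (w + z)| * ENNReal.ofReal (K (-w)))
          ≤ ∫⁻ w in Metric.ball (0:Ed d) 1,
            ENNReal.ofReal (L * (Λ * (2 - σ))) * ENNReal.ofReal (‖w‖ ^ (-((d:ℝ) + σ - 1))) := by
            refine setLIntegral_mono' measurableSet_ball fun w hw => ?_
            rcases eq_or_ne w 0 with rfl | hw0
            · simp
            · obtain ⟨hK0, hKle⟩ := hKb (-w) (neg_ne_zero.2 hw0)
              have hwn : (0:ℝ) < ‖w‖ := norm_pos_iff.2 hw0
              have h1 : |η z - η (w + z)| ≤ L * ‖w‖ := by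
                have := hL z (w + z)
                have h2 : z - (w + z) = -w := by abel
                rw [h2, norm_neg] at this
                exact this
              rw [norm_neg] at hKle
              rw [← ENNReal.ofReal_mul (abs_nonneg _), ← ENNReal.ofReal_mul (by positivity)]
              refine ENNReal.ofReal_le_ofReal ?_
              calc |η z - η (w + z)| * K (-w)
                  ≤ (L * ‖w‖) * (Λ * (2 - σ) * ‖w‖ ^ (-((d:ℝ) + σ))) :=
                    mul_le_mul h1 hKle hK0 (by positivity)
                _ = L * (Λ * (2 - σ)) * (‖w‖ ^ (-((d:ℝ) + σ - 1))) := by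
                    rw [show -((d:ℝ) + σ - 1) = 1 + -((d:ℝ) + σ) by ring,
                      Real.rpow_add hwn, Real.rpow_one]
                    ring
        _ = ENNReal.ofReal (L * (Λ * (2 - σ))) * I1 := by
            rw [hI1]; exact lintegral_const_mul' _ _ ENNReal.ofReal_ne_top
        _ ≤ C1 * ENNReal.ofReal (wt d σ z) := by
            rw [hC1]; exact hhelp _ z (hwt3 z hz3)
    · -- far z : integrand vanishes on ball
      calc (∫⁻ w in Metric.ball (0:Ed d) 1,
            ENNReal.ofReal |η z - η (w + z)| * ENNReal.ofReal (K (-w)))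
          ≤ ∫⁻ _ in Metric.ball (0:Ed d) 1, (0:ℝ≥0∞) := by
            refine setLIntegral_mono' measurableSet_ball fun w hw => ?_
            rw [mem_ball, dist_zero_right] at hw
            have h1 : η z = 0 := hη0 z (by linarith)
            have h2 : η (w + z) = 0 := by
              refine hη0 _ ?_
              have hz' : ‖z‖ ≤ ‖w + z‖ + ‖w‖ := by
                calc ‖z‖ = ‖(w + z) - w‖ := by congr 1; abel
                  _ ≤ ‖w + z‖ + ‖w‖ := norm_sub_le _ _
              linarith
            simp [h1, h2]
        _ = 0 := by simp
        _ ≤ C1 * ENNReal.ofReal (wt d σ z) := zero_le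
  have hcompl : (∫⁻ w in (Metric.ball (0:Ed d) 1)ᶜ,
      ENNReal.ofReal |η z - η (w + z)| * ENNReal.ofReal (K (-w)))
      ≤ (C2 + C3) * ENNReal.ofReal (wt d σ z) := by
    have hsplit : ∀ w : Ed d,
        ENNReal.ofReal |η z - η (w + z)| * ENNReal.ofReal (K (-w))
        ≤ ENNReal.ofReal |η z| * ENNReal.ofReal (K (-w))
          + ENNReal.ofReal |η (w + z)| * ENNReal.ofReal (K (-w)) := by
      intro w
      rw [← add_mul, ← ENNReal.ofReal_add (abs_nonneg _) (abs_nonneg _)]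
      refine mul_le_mul_left (ENNReal.ofReal_le_ofReal ?_) _
      exact abs_sub _ _
    have hm1 : Measurable fun w : Ed d => ENNReal.ofReal |η z| * ENNReal.ofReal (K (-w)) :=
      measurable_const.mul ((hKm.comp measurable_neg).ennreal_ofReal)
    calc (∫⁻ w in (Metric.ball (0:Ed d) 1)ᶜ,
          ENNReal.ofReal |η z - η (w + z)| * ENNReal.ofReal (K (-w)))
        ≤ ∫⁻ w in (Metric.ball (0:Ed d) 1)ᶜ,
          (ENNReal.ofReal |η z| * ENNReal.ofReal (K (-w))
            + ENNReal.ofReal |η (w + z)| * ENNReal.ofReal (K (-w))) :=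
          setLIntegral_mono' measurableSet_ball.compl fun w _ => hsplit w
      _ = (∫⁻ w in (Metric.ball (0:Ed d) 1)ᶜ, ENNReal.ofReal |η z| * ENNReal.ofReal (K (-w)))
          + ∫⁻ w in (Metric.ball (0:Ed d) 1)ᶜ,
            ENNReal.ofReal |η (w + z)| * ENNReal.ofReal (K (-w)) :=
          lintegral_add_left hm1 _
      _ ≤ C2 * ENNReal.ofReal (wt d σ z) + C3 * ENNReal.ofReal (wt d σ z) := by
          refine add_le_add ?_ ?_
          · -- η z term
            rcases lt_or_ge ‖z‖ 2 with hz2 | hz2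
            · calc (∫⁻ w in (Metric.ball (0:Ed d) 1)ᶜ,
                    ENNReal.ofReal |η z| * ENNReal.ofReal (K (-w)))
                  ≤ ∫⁻ w in (Metric.ball (0:Ed d) 1)ᶜ,
                    ENNReal.ofReal (M₀ * (Λ * (2 - σ))) * ENNReal.ofReal (‖w‖ ^ (-((d:ℝ) + σ))) := by
                    refine setLIntegral_mono' measurableSet_ball.compl fun w hw => ?_
                    have hw1 : (1:ℝ) ≤ ‖w‖ := by
                      simp only [Set.mem_compl_iff, mem_ball, dist_zero_right, not_lt] at hw
                      exact hw
                    have hw0 : w ≠ 0 := by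
                      intro h; rw [h, norm_zero] at hw1; linarith
                    obtain ⟨hK0, hKle⟩ := hKb (-w) (neg_ne_zero.2 hw0)
                    rw [norm_neg] at hKle
                    rw [← ENNReal.ofReal_mul (abs_nonneg _), ← ENNReal.ofReal_mul (by positivity)]
                    refine ENNReal.ofReal_le_ofReal ?_
                    calc |η z| * K (-w)
                        ≤ M₀ * (Λ * (2 - σ) * ‖w‖ ^ (-((d:ℝ) + σ))) :=
                          mul_le_mul (hM z) hKle hK0 hM0
                      _ = M₀ * (Λ * (2 - σ)) * ‖w‖ ^ (-((d:ℝ) + σ)) := by ring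
                _ = ENNReal.ofReal (M₀ * (Λ * (2 - σ))) * I2 := by
                    rw [hI2]; exact lintegral_const_mul' _ _ ENNReal.ofReal_ne_top
                _ ≤ C2 * ENNReal.ofReal (wt d σ z) := by
                    rw [hC2]; exact hhelp _ z (hwt3 z (by linarith))
            · have h1 : η z = 0 := hη0 z hz2
              simp only [h1, abs_zero, ENNReal.ofReal_zero, zero_mul, lintegral_const,
                zero_mul]
              exact zero_le
          · -- η (w+z) term
            set mz : ℝ := max 1 (‖z‖ - 2) with hmz
            have hmzpos : (0:ℝ) < mz := lt_of_lt_of_le one_pos (le_max_left _ _)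
            calc (∫⁻ w in (Metric.ball (0:Ed d) 1)ᶜ,
                  ENNReal.ofReal |η (w + z)| * ENNReal.ofReal (K (-w)))
                ≤ ∫⁻ w in (Metric.ball (0:Ed d) 1)ᶜ,
                  (Metric.ball (-z) 2).indicator
                    (fun _ => ENNReal.ofReal (M₀ * (Λ * (2 - σ)) * mz ^ (-((d:ℝ) + σ)))) w := by
                  refine setLIntegral_mono' measurableSet_ball.compl fun w hw => ?_
                  have hw1 : (1:ℝ) ≤ ‖w‖ := by
                    simp only [Set.mem_compl_iff, mem_ball, dist_zero_right, not_lt] at hw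
                    exact hw
                  have hw0 : w ≠ 0 := by
                    intro h; rw [h, norm_zero] at hw1; linarith
                  rcases lt_or_ge ‖w + z‖ 2 with hwz | hwz
                  · have hmem : w ∈ Metric.ball (-z) 2 := by
                      rw [mem_ball, dist_eq_norm, sub_neg_eq_add]
                      exact hwz
                    rw [Set.indicator_of_mem hmem]
                    obtain ⟨hK0, hKle⟩ := hKb (-w) (neg_ne_zero.2 hw0)
                    rw [norm_neg] at hKle
                    have hwm : mz ≤ ‖w‖ := by
                      refine max_le hw1 ?_
                      have : ‖z‖ ≤ ‖w + z‖ + ‖w‖ := by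
                        calc ‖z‖ = ‖(w + z) - w‖ := by congr 1; abel
                          _ ≤ ‖w + z‖ + ‖w‖ := norm_sub_le _ _
                      linarith
                    have hrp : ‖w‖ ^ (-((d:ℝ) + σ)) ≤ mz ^ (-((d:ℝ) + σ)) :=
                      Real.rpow_le_rpow_of_nonpos hmzpos hwm (by positivity |> neg_nonpos_of_nonneg)
                    rw [← ENNReal.ofReal_mul (abs_nonneg _)]
                    refine ENNReal.ofReal_le_ofReal ?_
                    calc |η (w + z)| * K (-w)
                        ≤ M₀ * (Λ * (2 - σ) * mz ^ (-((d:ℝ) + σ))) := by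
                          refine mul_le_mul (hM _) (hKle.trans ?_) hK0 hM0
                          exact mul_le_mul_of_nonneg_left hrp hρ.le
                      _ = M₀ * (Λ * (2 - σ)) * mz ^ (-((d:ℝ) + σ)) := by ring
                  · have h2 : η (w + z) = 0 := hη0 _ hwz
                    simp [h2]
              _ ≤ ∫⁻ w, (Metric.ball (-z) 2).indicator
                    (fun _ => ENNReal.ofReal (M₀ * (Λ * (2 - σ)) * mz ^ (-((d:ℝ) + σ)))) w :=
                  setLIntegral_le_lintegral _ _
              _ = ENNReal.ofReal (M₀ * (Λ * (2 - σ)) * mz ^ (-((d:ℝ) + σ)))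
                  * volume (Metric.ball (-z) 2) := by
                  rw [lintegral_indicator measurableSet_ball, setLIntegral_const]
              _ ≤ C3 * ENNReal.ofReal (wt d σ z) := by
                  rw [Measure.addHaar_ball_center volume (-z), hC3]
                  have hXY : ENNReal.ofReal (M₀ * (Λ * (2 - σ)) * mz ^ (-((d:ℝ) + σ)))
                      ≤ ENNReal.ofReal (M₀ * (Λ * (2 - σ)) * (4 ^ ((d:ℝ) + σ) * 2))
                        * ENNReal.ofReal (wt d σ z) := by
                    rw [← ENNReal.ofReal_mul (by positivity)]
                    refine ENNReal.ofReal_le_ofReal ?_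
                    have hfar := far_real_ineq d hσ0 z
                    calc M₀ * (Λ * (2 - σ)) * mz ^ (-((d:ℝ) + σ))
                        ≤ M₀ * (Λ * (2 - σ)) * (4 ^ ((d:ℝ) + σ) * 2 * wt d σ z) := by
                          refine mul_le_mul_of_nonneg_left hfar (by positivity)
                      _ = M₀ * (Λ * (2 - σ)) * (4 ^ ((d:ℝ) + σ) * 2) * wt d σ z := by ring
                  calc ENNReal.ofReal (M₀ * (Λ * (2 - σ)) * mz ^ (-((d:ℝ) + σ)))
                        * volume (Metric.ball (0:Ed d) 2)
                      ≤ (ENNReal.ofReal (M₀ * (Λ * (2 - σ)) * (4 ^ ((d:ℝ) + σ) * 2))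
                          * ENNReal.ofReal (wt d σ z)) * volume (Metric.ball (0:Ed d) 2) :=
                        mul_le_mul_left hXY _
                    _ = ENNReal.ofReal (M₀ * (Λ * (2 - σ)) * (4 ^ ((d:ℝ) + σ) * 2))
                          * volume (Metric.ball (0:Ed d) 2) * ENNReal.ofReal (wt d σ z) := by
                        ring
      _ = (C2 + C3) * ENNReal.ofReal (wt d σ z) := by rw [add_mul]
  calc (∫⁻ w in Metric.ball (0:Ed d) 1,
        ENNReal.ofReal |η z - η (w + z)| * ENNReal.ofReal (K (-w)))
      + ∫⁻ w in (Metric.ball (0:Ed d) 1)ᶜ,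
        ENNReal.ofReal |η z - η (w + z)| * ENNReal.ofReal (K (-w))
      ≤ C1 * ENNReal.ofReal (wt d σ z) + (C2 + C3) * ENNReal.ofReal (wt d σ z) :=
        add_le_add hball hcompl
    _ = (C1 + C2 + C3) * ENNReal.ofReal (wt d σ z) := by ring

lemma Ed.nontrivial (d : ℕ) (hd : 1 ≤ d) : Nontrivial (Ed d) := by
  refine ⟨EuclideanSpace.single (⟨0, hd⟩ : Fin d) (1:ℝ), 0, fun h => ?_⟩
  have := congrArg (fun v => v (⟨0, hd⟩ : Fin d)) h
  simp [EuclideanSpace.single] at this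


lemma pointwise_comm_bound (d : ℕ) (hd : 1 ≤ d) (η u K : Ed d → ℝ)
    (hηc : Continuous η) (hu : Measurable u) (hK : Measurable K)
    (hKnn : ∀ y : Ed d, y ≠ 0 → 0 ≤ K y) (x : Ed d) :
    ENNReal.ofReal |Lop0 K (fun z => η z * u z) x - η x * Lop0 K u x|
      ≤ ∫⁻ z, (ENNReal.ofReal |η z - η x| * ENNReal.ofReal (K (z - x)))
          * ENNReal.ofReal |u z| := by
  haveI : Nontrivial (Ed d) := Ed.nontrivial d hd
  set Cf : Ed d → ℝ := fun y => (η (x + y) - η x) * u (x + y) * K y with hCf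
  set Bf : Ed d → ℝ := fun y => (u (x + y) - u x) * K y with hBf
  set Af : Ed d → ℝ := fun y => (η (x + y) * u (x + y) - η x * u x) * K y with hAf
  have hCm : Measurable Cf := by
    refine (((hηc.measurable.comp (measurable_const.add measurable_id)).sub
      measurable_const).mul (hu.comp (measurable_const.add measurable_id))).mul hK
  -- RHS equals lintegral of ennnorm of Cf
  have hRHS : (∫⁻ z, (ENNReal.ofReal |η z - η x| * ENNReal.ofReal (K (z - x)))
      * ENNReal.ofReal |u z|) = ∫⁻ y, (‖Cf y‖₊ : ℝ≥0∞) := by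
    rw [← lintegral_add_left_eq_self
      (fun z => (ENNReal.ofReal |η z - η x| * ENNReal.ofReal (K (z - x)))
        * ENNReal.ofReal |u z|) x]
    have hae : ∀ᵐ y : Ed d, y ≠ 0 := by
      refine ae_iff.2 ?_
      have : {y : Ed d | ¬ y ≠ 0} = {0} := by ext y; simp
      rw [this, measure_singleton]
    refine lintegral_congr_ae ?_
    filter_upwards [hae] with y hy
    have hK0 : 0 ≤ K y := hKnn y hy
    have h1 : x + y - x = y := by abel
    rw [h1]
    rw [← ENNReal.ofReal_mul (abs_nonneg _), ← ENNReal.ofReal_mul (by positivity)]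
    rw [show ((‖Cf y‖₊ : ℝ≥0∞)) = ENNReal.ofReal ‖Cf y‖ from (ofReal_norm_eq_enorm _).symm]
    congr 1
    rw [Real.norm_eq_abs, hCf]
    rw [abs_mul, abs_mul, abs_of_nonneg hK0]
    ring
  rw [hRHS]
  have hkey : ∀ y, Af y = Cf y + η x * Bf y := by
    intro y; simp only [hAf, hCf, hBf]; ring
  simp only [Lop0]
  by_cases hCint : Integrable Cf volume
  swap
  · have htop : (∫⁻ y, (‖Cf y‖₊ : ℝ≥0∞)) = ⊤ := by
      by_contra h
      exact hCint ⟨hCm.aestronglyMeasurable,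
        lt_top_iff_ne_top.2 h⟩
    rw [htop]
    exact le_top
  · by_cases hBint : Integrable Bf volume
    · have hAint : Integrable Af volume := by
        rw [show Af = fun y => Cf y + η x * Bf y from funext hkey]
        exact hCint.add (hBint.const_mul _)
      have hFeq : (∫ y, ((fun z => η z * u z) (x + y) - (fun z => η z * u z) x) * K y)
          - η x * ∫ y, (u (x + y) - u x) * K y = ∫ y, Cf y := by
        have h1 : (∫ y, ((fun z => η z * u z) (x + y) - (fun z => η z * u z) x) * K y)
            = ∫ y, Af y := rfl
        have h2 : (∫ y, Af y) = (∫ y, Cf y) + η x * ∫ y, Bf y := by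
          rw [show Af = fun y => Cf y + η x * Bf y from funext hkey]
          rw [integral_add hCint (hBint.const_mul _), integral_const_mul]
        rw [h1, h2]; ring
      rw [hFeq]
      calc ENNReal.ofReal |∫ y, Cf y| = (‖∫ y, Cf y‖₊ : ℝ≥0∞) := by
            rw [← enorm_eq_nnnorm, ← ofReal_norm_eq_enorm, Real.norm_eq_abs]
        _ ≤ ∫⁻ y, (‖Cf y‖₊ : ℝ≥0∞) := enorm_integral_le_lintegral_enorm _
    · by_cases hηx : η x = 0
      · have hACeq : Af = Cf := by
          funext y
          rw [hkey y, hηx]; ring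
        have hFeq : (∫ y, ((fun z => η z * u z) (x + y) - (fun z => η z * u z) x) * K y)
            - η x * ∫ y, (u (x + y) - u x) * K y = ∫ y, Cf y := by
          have h1 : (∫ y, ((fun z => η z * u z) (x + y) - (fun z => η z * u z) x) * K y)
              = ∫ y, Af y := rfl
          rw [h1, hACeq, hηx]; ring
        rw [hFeq]
        calc ENNReal.ofReal |∫ y, Cf y| = (‖∫ y, Cf y‖₊ : ℝ≥0∞) := by
              rw [← enorm_eq_nnnorm, ← ofReal_norm_eq_enorm, Real.norm_eq_abs]
          _ ≤ ∫⁻ y, (‖Cf y‖₊ : ℝ≥0∞) := enorm_integral_le_lintegral_enorm _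
      · have hAint : ¬ Integrable Af volume := by
          intro hAint
          refine hBint ?_
          have : Bf = fun y => (η x)⁻¹ * (Af y - Cf y) := by
            funext y
            rw [hkey y]
            field_simp
            ring
          rw [this]
          exact (hAint.sub hCint).const_mul _
        have h1 : (∫ y, ((fun z => η z * u z) (x + y) - (fun z => η z * u z) x) * K y)
            = ∫ y, Af y := rfl
        rw [h1, integral_undef hAint, integral_undef hBint]
        simp

/-- Commutator estimate: for `σ ∈ (0,1)`, a cutoff `η ∈ C₀^∞(B₂)` with `η ≡ 1` on `B₁`,
and `0 ≤ K(y) ≤ Λ(2-σ)|y|^{-d-σ}`, one has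
`‖L(ηu) - η Lu‖_{L_p(ℝ^d)} ≤ N(d,Λ,σ,p,η) ‖u‖_{L_p(ℝ^d,ω)}` for all `u ∈ L_p(ω)`. -/
theorem stmt16 (d : ℕ) (hd : 1 ≤ d) (σ Λ p : ℝ) (hσ0 : 0 < σ) (hσ1 : σ < 1)
    (hΛ : 0 < Λ) (hp1 : 1 < p)
    (η : Ed d → ℝ) (hη : ContDiff ℝ (⊤ : ℕ∞) η) (hηsupp : tsupport η ⊆ Metric.ball (0 : Ed d) 2)
    (hηcpt : HasCompactSupport η) (hη1 : ∀ x ∈ Metric.ball (0 : Ed d) 1, η x = 1) :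
    ∃ N : ℝ, 0 < N ∧ ∀ K : Ed d → ℝ, Measurable K →
      (∀ y : Ed d, y ≠ 0 → 0 ≤ K y ∧ K y ≤ Λ * (2 - σ) * ‖y‖ ^ (-((d : ℝ) + σ))) →
      ∀ u : Ed d → ℝ, Measurable u →
        Integrable (fun x => |u x| ^ p * wt d σ x) volume →
        (∫ x, |Lop0 K (fun z => η z * u z) x - η x * Lop0 K u x| ^ p) ^ (1 / p) ≤
          N * (∫ x, |u x| ^ p * wt d σ x) ^ (1 / p) := by
  -- Lipschitz and sup bounds for η
  obtain ⟨Lnn, hLip⟩ := hη.lipschitzWith_of_hasCompactSupport hηcpt (by simp)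
  set L : ℝ := (Lnn : ℝ) with hLdef
  have hL0 : 0 ≤ L := Lnn.coe_nonneg
  have hL : ∀ x y : Ed d, |η x - η y| ≤ L * ‖x - y‖ := by
    intro x y
    have := hLip.dist_le_mul x y
    rwa [Real.dist_eq, dist_eq_norm] at this
  obtain ⟨M₀, hM'⟩ := hη.continuous.bounded_above_of_compact_support hηcpt
  have hM : ∀ x, |η x| ≤ M₀ := fun x => by
    have := hM' x; rwa [Real.norm_eq_abs] at this
  have hM0 : 0 ≤ M₀ := le_trans (abs_nonneg _) (hM 0)
  obtain ⟨A, hAne, hA⟩ := kernel_bound_z d hd hσ0 hσ1 hΛ η hL0 hM0 hL hM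
  obtain ⟨C, hCne, hC⟩ := kernel_bound_x d hd hσ0 hσ1 hΛ η hη.continuous hηsupp hL0 hM0 hL hM
  -- conjugate exponent
  have hq : p.HolderConjugate (p / (p - 1)) := Real.HolderConjugate.conjExponent hp1
  set q : ℝ := p / (p - 1) with hqdef
  have hp0 : (0:ℝ) < p := hq.pos
  have hq0 : (0:ℝ) < q := hq.symm.pos
  have hp1' : (0:ℝ) ≤ p - 1 := by linarith
  set NN : ℝ≥0∞ := A ^ (p - 1) * C with hNN
  have hNNne : NN ≠ ∞ :=
    ENNReal.mul_ne_top (ENNReal.rpow_ne_top_of_nonneg hp1' hAne) hCne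
  refine ⟨max 1 (NN.toReal ^ (1 / p)), lt_of_lt_of_le one_pos (le_max_left _ _), ?_⟩
  intro K hKm hKb u hu hui
  set F : Ed d → ℝ := fun x => Lop0 K (fun z => η z * u z) x - η x * Lop0 K u x with hF
  set κ : Ed d → Ed d → ℝ≥0∞ :=
    fun x z => ENNReal.ofReal |η z - η x| * ENNReal.ofReal (K (z - x)) with hκ
  set h : Ed d → ℝ≥0∞ := fun z => ENNReal.ofReal (|u z| ^ p) with hh
  have hκm : ∀ x, Measurable (fun z => κ x z) := by
    intro x
    exact (((hη.continuous.measurable).sub measurable_const).abs.ennreal_ofReal).mul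
      ((hKm.comp (measurable_id.sub measurable_const)).ennreal_ofReal)
  have hκfin : ∀ x z, κ x z ≠ ∞ := fun x z =>
    ENNReal.mul_ne_top ENNReal.ofReal_ne_top ENNReal.ofReal_ne_top
  -- measurability of F
  have hFm : Measurable F := by
    have h1 : StronglyMeasurable (fun xy : Ed d × Ed d =>
        (u (xy.1 + xy.2) - u xy.1) * K xy.2) :=
      (((hu.comp (measurable_fst.add measurable_snd)).sub
        (hu.comp measurable_fst)).mul (hKm.comp measurable_snd)).stronglyMeasurable
    have h2 : StronglyMeasurable (fun xy : Ed d × Ed d =>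
        ((fun z => η z * u z) (xy.1 + xy.2) - (fun z => η z * u z) xy.1) * K xy.2) := by
      refine Measurable.stronglyMeasurable ?_
      have hm : Measurable (fun z : Ed d => η z * u z) := hη.continuous.measurable.mul hu
      exact ((hm.comp (measurable_fst.add measurable_snd)).sub
        (hm.comp measurable_fst)).mul (hKm.comp measurable_snd)
    have g1 : Measurable (fun x => Lop0 K u x) :=
      (h1.integral_prod_right').measurable
    have g2 : Measurable (fun x => Lop0 K (fun z => η z * u z) x) :=
      (h2.integral_prod_right').measurable
    exact g2.sub ((hη.continuous.measurable).mul g1)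
  -- per-x estimate
  have hstep : ∀ x : Ed d, ENNReal.ofReal (|F x| ^ p)
      ≤ A ^ (p - 1) * ∫⁻ z, κ x z * h z := by
    intro x
    have hpt : ENNReal.ofReal |F x| ≤ ∫⁻ z, κ x z * ENNReal.ofReal |u z| :=
      pointwise_comm_bound d hd η u K hη.continuous hu hKm (fun y hy => (hKb y hy).1) x
    -- Hölder
    have hHold : (∫⁻ z, κ x z * ENNReal.ofReal |u z|)
        ≤ (∫⁻ z, κ x z) ^ (1 / q) * (∫⁻ z, κ x z * h z) ^ (1 / p) := by
      have hf : AEMeasurable (fun z => (κ x z) ^ (1 / q)) volume :=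
        ((hκm x).pow_const _).aemeasurable
      have hg : AEMeasurable (fun z => (κ x z) ^ (1 / p) * ENNReal.ofReal |u z|) volume :=
        (((hκm x).pow_const _).mul (hu.abs.ennreal_ofReal)).aemeasurable
      have key := ENNReal.lintegral_mul_le_Lp_mul_Lq volume hq.symm hf hg
      have e1 : (∫⁻ z, ((fun z => (κ x z) ^ (1 / q)) * fun z =>
          (κ x z) ^ (1 / p) * ENNReal.ofReal |u z|) z)
          = ∫⁻ z, κ x z * ENNReal.ofReal |u z| := by
        refine lintegral_congr fun z => ?_
        simp only [Pi.mul_apply]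
        rcases eq_or_ne (κ x z) 0 with h0 | h0
        · rw [h0, ENNReal.zero_rpow_of_pos (by positivity), ENNReal.zero_rpow_of_pos
            (by positivity)]
          simp
        · rw [← mul_assoc, ← ENNReal.rpow_add _ _ h0 (hκfin x z)]
          have he : (1 / q + 1 / p : ℝ) = 1 := by
            rw [one_div, one_div, add_comm]
            simpa using hq.inv_add_inv_eq_inv
          rw [he, ENNReal.rpow_one]
      have e2 : (∫⁻ z, ((κ x z) ^ (1 / q)) ^ q) = ∫⁻ z, κ x z := by
        refine lintegral_congr fun z => ?_
        rw [← ENNReal.rpow_mul, one_div, inv_mul_cancel₀ hq0.ne', ENNReal.rpow_one]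
      have e3 : (∫⁻ z, ((κ x z) ^ (1 / p) * ENNReal.ofReal |u z|) ^ p)
          = ∫⁻ z, κ x z * h z := by
        refine lintegral_congr fun z => ?_
        rw [ENNReal.mul_rpow_of_nonneg _ _ hp0.le, ← ENNReal.rpow_mul, one_div,
          inv_mul_cancel₀ hp0.ne', ENNReal.rpow_one,
          ENNReal.ofReal_rpow_of_nonneg (abs_nonneg _) hp0.le]
      rw [e1, e2, e3] at key
      exact key
    calc ENNReal.ofReal (|F x| ^ p) = (ENNReal.ofReal |F x|) ^ p := by
          rw [ENNReal.ofReal_rpow_of_nonneg (abs_nonneg _) hp0.le]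
      _ ≤ ((∫⁻ z, κ x z) ^ (1 / q) * (∫⁻ z, κ x z * h z) ^ (1 / p)) ^ p :=
          ENNReal.rpow_le_rpow (hpt.trans hHold) hp0.le
      _ = ((∫⁻ z, κ x z) ^ (1 / q)) ^ p * (((∫⁻ z, κ x z * h z) ^ (1 / p)) ^ p) :=
          ENNReal.mul_rpow_of_nonneg _ _ hp0.le
      _ = (∫⁻ z, κ x z) ^ ((1 / q) * p) * ∫⁻ z, κ x z * h z := by
          rw [← ENNReal.rpow_mul, ← ENNReal.rpow_mul,
            show (1 / p * p : ℝ) = 1 by field_simp, ENNReal.rpow_one]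
      _ ≤ A ^ ((1 / q) * p) * ∫⁻ z, κ x z * h z := by
          refine mul_le_mul_left (ENNReal.rpow_le_rpow (hA K hKb x) (by positivity)) _
      _ = A ^ (p - 1) * ∫⁻ z, κ x z * h z := by
          congr 1
          rw [show (1 / q) * p = p / q by ring, hq.div_conj_eq_sub_one]
  -- integrate in x and swap
  have hswapm : Measurable (fun xz : Ed d × Ed d => κ xz.1 xz.2 * h xz.2) := by
    refine Measurable.mul (f := fun xz : Ed d × Ed d => κ xz.1 xz.2) (g := fun xz : Ed d × Ed d => h xz.2) ?_ ?_
    · exact (((hη.continuous.measurable.comp measurable_snd).sub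
        (hη.continuous.measurable.comp measurable_fst)).abs.ennreal_ofReal).mul
        ((hKm.comp (measurable_snd.sub measurable_fst)).ennreal_ofReal)
    · exact (((hu.comp measurable_snd).abs.pow_const _).ennreal_ofReal)
  have hIu0 : 0 ≤ ∫ x, |u x| ^ p * wt d σ x := by
    refine integral_nonneg fun x => ?_
    have : 0 < wt d σ x := by rw [wt]; positivity
    positivity
  have hmain : (∫⁻ x, ENNReal.ofReal (|F x| ^ p))
      ≤ NN * ENNReal.ofReal (∫ x, |u x| ^ p * wt d σ x) := by
    calc (∫⁻ x, ENNReal.ofReal (|F x| ^ p))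
        ≤ ∫⁻ x, A ^ (p - 1) * ∫⁻ z, κ x z * h z := lintegral_mono hstep
      _ = A ^ (p - 1) * ∫⁻ x, ∫⁻ z, κ x z * h z :=
          lintegral_const_mul' _ _ (ENNReal.rpow_ne_top_of_nonneg hp1' hAne)
      _ = A ^ (p - 1) * ∫⁻ z, ∫⁻ x, κ x z * h z := by
          rw [lintegral_lintegral_swap hswapm.aemeasurable]
      _ = A ^ (p - 1) * ∫⁻ z, (∫⁻ x, κ x z) * h z := by
          congr 1
          refine lintegral_congr fun z => ?_
          exact lintegral_mul_const' _ _ ENNReal.ofReal_ne_top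
      _ ≤ A ^ (p - 1) * ∫⁻ z, (C * ENNReal.ofReal (wt d σ z)) * h z := by
          refine mul_le_mul_right (lintegral_mono fun z => ?_) _
          exact mul_le_mul_left (hC K hKm hKb z) _
      _ = A ^ (p - 1) * (C * ∫⁻ z, ENNReal.ofReal (wt d σ z) * h z) := by
          congr 1
          rw [← lintegral_const_mul' _ _ hCne]
          refine lintegral_congr fun z => ?_
          ring
      _ = NN * ∫⁻ z, ENNReal.ofReal (|u z| ^ p * wt d σ z) := by
          rw [hNN, mul_assoc]
          congr 1
          congr 1
          refine lintegral_congr fun z => ?_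
          rw [ENNReal.ofReal_mul (by positivity)]
          ring
      _ = NN * ENNReal.ofReal (∫ x, |u x| ^ p * wt d σ x) := by
          congr 1
          rw [← ofReal_integral_eq_lintegral_ofReal hui]
          refine ae_of_all _ fun x => ?_
          have : 0 < wt d σ x := by rw [wt]; positivity
          positivity
  -- final conversion to real
  have hTne : NN * ENNReal.ofReal (∫ x, |u x| ^ p * wt d σ x) ≠ ∞ :=
    ENNReal.mul_ne_top hNNne ENNReal.ofReal_ne_top
  have hFea : AEStronglyMeasurable (fun x => |F x| ^ p) volume :=
    (hFm.abs.pow_const _).aestronglyMeasurable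
  have hint_eq : (∫ x, |F x| ^ p) = (∫⁻ x, ENNReal.ofReal (|F x| ^ p)).toReal := by
    rw [integral_eq_lintegral_of_nonneg_ae
      (ae_of_all _ fun x => Real.rpow_nonneg (abs_nonneg _) p) hFea]
  rw [hint_eq]
  have htoReal : (∫⁻ x, ENNReal.ofReal (|F x| ^ p)).toReal
      ≤ NN.toReal * ∫ x, |u x| ^ p * wt d σ x := by
    have := ENNReal.toReal_mono hTne hmain
    rwa [ENNReal.toReal_mul, ENNReal.toReal_ofReal hIu0] at this
  calc ((∫⁻ x, ENNReal.ofReal (|F x| ^ p)).toReal) ^ (1 / p)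
      ≤ (NN.toReal * ∫ x, |u x| ^ p * wt d σ x) ^ (1 / p) :=
        Real.rpow_le_rpow ENNReal.toReal_nonneg htoReal (by positivity)
    _ = NN.toReal ^ (1 / p) * (∫ x, |u x| ^ p * wt d σ x) ^ (1 / p) :=
        Real.mul_rpow ENNReal.toReal_nonneg hIu0
    _ ≤ max 1 (NN.toReal ^ (1 / p)) * (∫ x, |u x| ^ p * wt d σ x) ^ (1 / p) := by
        refine mul_le_mul_of_nonneg_right (le_max_right _ _) ?_
        positivity
end
end
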